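/- Let H, ρ, F be as in the twist map setting, and assume additionally that all second partial derivatives of H are bounded in absolute value by some M > 0. Let u : ℝ → ℝ be C¹ with u(x + 1) = u(x), let c ∈ ℝ, and suppose the graph {(x, c + u'(x)) : x ∈ ℝ} is invariant under F (F maps it bijectively onto itself). Define T_c u(x) := inf_{y ∈ ℝ} ( u(y) + H(y, x) - c(x - y) ). Then there exists α ∈ ℝ such that T_c u(x) = u(x) - α for all x ∈ ℝ; i.e., u is a weak KAM solution. -/

import Mathlib

/-!
Invariance of the graph of `c + u'` makes `y ↦ x`, where `F (y, c + u' y) = (x, c + u' x)`,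
a well-defined injective map `g`. The twist condition and the bound on `∂₁₁H` make it
continuous, and periodicity gives `g (y + 1) = g y + 1`, so `g` is an increasing
homeomorphism of `ℝ`. The `y`-derivative of `u y + H y x - c (x - y)` is
`∂₁H(y, x) - ∂₁H(y, g y)`, which by the twist has the sign of `g y - x`; hence the infimum
defining `T_c u x` is attained at `y = g⁻¹ x`. Comparing the costs at the minimizers for `a`
and `b` bounds the increment of `T_c u - u` by `M |g⁻¹ b - g⁻¹ a| |b - a|`, so `T_c u - u` has
zero derivative everywhere and is constant.
-/

open Real

/-- Partial derivative of `H` in the first variable. -/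
noncomputable def D1 (H : ℝ → ℝ → ℝ) (x x' : ℝ) : ℝ := deriv (fun t => H t x') x

/-- Partial derivative of `H` in the second variable. -/
noncomputable def D2 (H : ℝ → ℝ → ℝ) (x x' : ℝ) : ℝ := deriv (fun t => H x t) x'

/-- Mixed second partial derivative `∂₁₂H`. -/
noncomputable def D12 (H : ℝ → ℝ → ℝ) (x x' : ℝ) : ℝ := deriv (fun t => D1 H x t) x'

/-- Second partial derivative `∂₁₁H`. -/
noncomputable def D11 (H : ℝ → ℝ → ℝ) (x x' : ℝ) : ℝ := deriv (fun t => D1 H t x') x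

/-- Mixed second partial derivative `∂₂₁H`. -/
noncomputable def D21 (H : ℝ → ℝ → ℝ) (x x' : ℝ) : ℝ := deriv (fun t => D2 H t x') x

/-- Second partial derivative `∂₂₂H`. -/
noncomputable def D22 (H : ℝ → ℝ → ℝ) (x x' : ℝ) : ℝ := deriv (fun t => D2 H x t) x'

open Function Set Filter Topology

lemma Function.Periodic.deriv {𝕜 E : Type*} [NontriviallyNormedField 𝕜] [NormedAddCommGroup E]
    [NormedSpace 𝕜 E] {f : 𝕜 → E} {p : 𝕜} (hf : Periodic f p) :
    Periodic (deriv f) p := fun x => by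
  rw [← deriv_comp_add_const, show (fun t => f (t + p)) = f from funext hf]

lemma IsMinOn.ciInf_eq {ι α : Type*} [ConditionallyCompleteLattice α] {f : ι → α} {a : ι}
    (hf : IsMinOn f univ a) : ⨅ x, f x = f a :=
  haveI : Nonempty ι := ⟨a⟩
  IsGLB.ciInf_eq (IsLeast.isGLB ⟨mem_range_self a, forall_mem_range.2 fun x => hf (mem_univ x)⟩)

/-- Continuity of `w` makes the bound `o(|b - a|)`, so `f` has derivative `0` everywhere. -/
lemma eq_of_abs_sub_le_mul_abs_sub {f w : ℝ → ℝ} {K : ℝ} (hw : Continuous w)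
    (hf : ∀ a b, |f b - f a| ≤ K * |w b - w a| * |b - a|) (a b : ℝ) : f a = f b := by
  have hderiv : ∀ x, HasDerivAt f 0 x := by
    intro x
    rw [hasDerivAt_iff_isLittleO]
    refine Asymptotics.IsLittleO.of_bound fun ε hε => ?_
    have hK : 0 < |K| + 1 := by positivity
    have hclose : ∀ᶠ y in 𝓝 x, |w y - w x| < ε / (|K| + 1) := by
      simpa only [Real.dist_eq] using Metric.tendsto_nhds.1 (hw.tendsto x) _ (div_pos hε hK)
    filter_upwards [hclose] with y hy
    simp only [smul_zero, sub_zero, Real.norm_eq_abs]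
    have hKw : K * |w y - w x| ≤ ε :=
      calc K * |w y - w x| ≤ (|K| + 1) * |w y - w x| := by
            gcongr; linarith [le_abs_self K]
        _ ≤ (|K| + 1) * (ε / (|K| + 1)) := by gcongr
        _ = ε := by field_simp
    exact (hf x y).trans (mul_le_mul_of_nonneg_right hKw (abs_nonneg _))
  exact is_const_of_deriv_eq_zero (fun x => (hderiv x).differentiableAt)
    (fun x => (hderiv x).deriv) a b

section TwoVariables

variable {f : ℝ → ℝ → ℝ}

lemma Differentiable.differentiable_left (hf : Differentiable ℝ (uncurry f)) (y : ℝ) :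
    Differentiable ℝ (fun t => f t y) :=
  hf.comp (differentiable_id.prodMk (differentiable_const y))

lemma Differentiable.differentiable_right (hf : Differentiable ℝ (uncurry f)) (x : ℝ) :
    Differentiable ℝ (fun t => f x t) :=
  hf.comp ((differentiable_const x).prodMk differentiable_id)

lemma abs_sub_le_of_abs_deriv_left_le (hf : Differentiable ℝ (uncurry f)) {C : ℝ}
    (hC : ∀ x y : ℝ, |deriv (fun t => f t y) x| ≤ C) (y a b : ℝ) :
    |f b y - f a y| ≤ C * |b - a| := by
  simpa only [Real.norm_eq_abs] using Convex.norm_image_sub_le_of_norm_deriv_le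
    (fun x _ => hf.differentiable_left y x) (fun x _ => hC x y)
    convex_univ (mem_univ a) (mem_univ b)

lemma sub_le_of_deriv_right_le (hf : Differentiable ℝ (uncurry f)) {C : ℝ}
    (hC : ∀ x y : ℝ, deriv (fun t => f x t) y ≤ C) (x : ℝ) ⦃a b : ℝ⦄ (hab : a ≤ b) :
    f x b - f x a ≤ C * (b - a) :=
  image_sub_le_mul_sub_of_deriv_le (hf.differentiable_right x) (hC x) hab

lemma D1_eq_fderiv (hf : Differentiable ℝ (uncurry f)) (x y : ℝ) :
    D1 f x y = fderiv ℝ (uncurry f) (x, y) (1, 0) :=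
  ((hf (x, y)).hasFDerivAt.comp_hasDerivAt (f := fun t => ((t, y) : ℝ × ℝ)) x
    ((hasDerivAt_id x).prodMk (hasDerivAt_const x y))).deriv

lemma D2_eq_fderiv (hf : Differentiable ℝ (uncurry f)) (x y : ℝ) :
    D2 f x y = fderiv ℝ (uncurry f) (x, y) (0, 1) :=
  ((hf (x, y)).hasFDerivAt.comp_hasDerivAt (f := fun t => ((x, t) : ℝ × ℝ)) y
    ((hasDerivAt_const y x).prodMk (hasDerivAt_id y))).deriv

lemma differentiable_uncurry_D1 (hf : ContDiff ℝ 2 (uncurry f)) :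
    Differentiable ℝ (uncurry (D1 f)) := by
  have hD : uncurry (D1 f) = fun p => fderiv ℝ (uncurry f) p (1, 0) :=
    funext fun p => D1_eq_fderiv (hf.differentiable two_ne_zero) p.1 p.2
  rw [hD]
  exact ((hf.fderiv_right (by norm_num)).clm_apply contDiff_const).differentiable one_ne_zero

lemma differentiable_uncurry_D2 (hf : ContDiff ℝ 2 (uncurry f)) :
    Differentiable ℝ (uncurry (D2 f)) := by
  have hD : uncurry (D2 f) = fun p => fderiv ℝ (uncurry f) p (0, 1) :=
    funext fun p => D2_eq_fderiv (hf.differentiable two_ne_zero) p.1 p.2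
  rw [hD]
  exact ((hf.fderiv_right (by norm_num)).clm_apply contDiff_const).differentiable one_ne_zero

lemma D1_add_one (hf : ∀ x y, f (x + 1) (y + 1) = f x y) (x y : ℝ) :
    D1 f (x + 1) (y + 1) = D1 f x y := by
  rw [D1, ← deriv_comp_add_const]
  simp only [hf]
  rfl

end TwoVariables

/-- `T_c u x = ⨅ y, laxOleinikCost H c u x y`. -/
def laxOleinikCost (H : ℝ → ℝ → ℝ) (c : ℝ) (u : ℝ → ℝ) (x y : ℝ) : ℝ :=
  u y + H y x - c * (x - y)

section TwistMap

variable {H : ℝ → ℝ → ℝ} {ρ M c : ℝ} {u g : ℝ → ℝ}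

lemma mul_abs_sub_le_abs_D1_sub (hH : ContDiff ℝ 2 (uncurry H))
    (htwist : ∀ x x', D12 H x x' ≤ -ρ) (x z z' : ℝ) :
    ρ * |z - z'| ≤ |D1 H x z - D1 H x z'| := by
  wlog hz : z ≤ z' generalizing z z'
  · rw [abs_sub_comm, abs_sub_comm (D1 H x z)]
    exact this z' z (le_of_not_ge hz)
  have hdec := sub_le_of_deriv_right_le (differentiable_uncurry_D1 hH) htwist x hz
  rw [abs_sub_comm, abs_of_nonneg (sub_nonneg.2 hz)]
  exact (by linarith : ρ * (z' - z) ≤ D1 H x z - D1 H x z').trans (le_abs_self _)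

lemma D1_injective (hH : ContDiff ℝ 2 (uncurry H)) (hρ : 0 < ρ)
    (htwist : ∀ x x', D12 H x x' ≤ -ρ) (x : ℝ) : Injective (D1 H x) := fun z z' hzz' => by
  by_contra hne
  have := mul_abs_sub_le_abs_D1_sub hH htwist x z z'
  rw [hzz', sub_self, abs_zero] at this
  exact (mul_pos hρ (abs_pos.2 (sub_ne_zero.2 hne))).not_ge this

lemma exists_bijective_of_bijOn_graph {F : ℝ × ℝ → ℝ × ℝ}
    (hFdef : ∀ x r x' r', F (x, r) = (x', r') ↔ (r = -D1 H x x' ∧ r' = D2 H x x'))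
    (hinv : BijOn F {p : ℝ × ℝ | p.2 = c + deriv u p.1}
      {p : ℝ × ℝ | p.2 = c + deriv u p.1}) :
    ∃ g : ℝ → ℝ, Bijective g ∧ (∀ y, c + deriv u y = -D1 H y (g y)) ∧
      ∀ y, c + deriv u (g y) = D2 H y (g y) := by
  set g : ℝ → ℝ := fun y => (F (y, c + deriv u y)).1
  have hFg : ∀ y, F (y, c + deriv u y) = (g y, c + deriv u (g y)) :=
    fun y => Prod.ext rfl (hinv.mapsTo (rfl : (y, c + deriv u y).2 = _))
  refine ⟨g, ⟨fun y y' hyy' => ?_, fun x => ?_⟩, fun y => ((hFdef _ _ _ _).1 (hFg y)).1,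
    fun y => ((hFdef _ _ _ _).1 (hFg y)).2⟩
  · have := hinv.injOn (rfl : (y, c + deriv u y).2 = _) (rfl : (y', c + deriv u y').2 = _)
      (by rw [hFg, hFg, hyy'])
    exact congrArg Prod.fst this
  · obtain ⟨p, hp, hpx⟩ := hinv.surjOn (rfl : (x, c + deriv u x).2 = _)
    have hp' : (p.1, c + deriv u p.1) = p := Prod.ext rfl hp.symm
    exact ⟨p.1, by simp only [g, hp', hpx]⟩

lemma continuous_of_D1_eq (hH : ContDiff ℝ 2 (uncurry H)) (hρ : 0 < ρ)
    (htwist : ∀ x x', D12 H x x' ≤ -ρ) (hD11 : ∀ x x', |D11 H x x'| ≤ M)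
    (hu' : Continuous (deriv u)) (hg : ∀ y, c + deriv u y = -D1 H y (g y)) : Continuous g := by
  have hest :
      ∀ y y₀, |g y - g y₀| ≤ (|deriv u y - deriv u y₀| + M * |y - y₀|) / ρ := by
    intro y y₀
    rw [le_div_iff₀ hρ, mul_comm]
    calc ρ * |g y - g y₀| ≤ |D1 H y (g y) - D1 H y (g y₀)| :=
          mul_abs_sub_le_abs_D1_sub hH htwist y _ _
      _ = |(deriv u y₀ - deriv u y) + (D1 H y₀ (g y₀) - D1 H y (g y₀))| := by
          congr 1; linarith [hg y, hg y₀]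
      _ ≤ |deriv u y₀ - deriv u y| + |D1 H y₀ (g y₀) - D1 H y (g y₀)| := abs_add_le _ _
      _ ≤ |deriv u y - deriv u y₀| + M * |y - y₀| := by
          rw [abs_sub_comm (deriv u y₀), abs_sub_comm y]
          gcongr
          exact abs_sub_le_of_abs_deriv_left_le (differentiable_uncurry_D1 hH) hD11 _ _ _
  refine continuous_iff_continuousAt.2 fun y₀ => tendsto_iff_dist_tendsto_zero.2 <|
    squeeze_zero (fun _ => dist_nonneg) (fun y => (Real.dist_eq _ _).trans_le (hest y y₀)) ?_
  have : Continuous fun y => (|deriv u y - deriv u y₀| + M * |y - y₀|) / ρ := by fun_prop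
  simpa using this.tendsto y₀

lemma add_one_of_D1_eq (hH : ContDiff ℝ 2 (uncurry H)) (hρ : 0 < ρ)
    (htwist : ∀ x x', D12 H x x' ≤ -ρ) (hper : ∀ x x', H (x + 1) (x' + 1) = H x x')
    (huper : Periodic u 1) (hg : ∀ y, c + deriv u y = -D1 H y (g y)) (y : ℝ) :
    g (y + 1) = g y + 1 :=
  D1_injective hH hρ htwist (y + 1) <| by
    linarith [hg y, hg (y + 1), huper.deriv y, D1_add_one hper y (g y)]

lemma strictMono_of_D1_eq (hH : ContDiff ℝ 2 (uncurry H)) (hρ : 0 < ρ)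
    (htwist : ∀ x x', D12 H x x' ≤ -ρ) (hD11 : ∀ x x', |D11 H x x'| ≤ M)
    (hu' : Continuous (deriv u)) (hper : ∀ x x', H (x + 1) (x' + 1) = H x x')
    (huper : Periodic u 1) (hg : ∀ y, c + deriv u y = -D1 H y (g y)) (hinj : Injective g) :
    StrictMono g :=
  ((continuous_of_D1_eq hH hρ htwist hD11 hu' hg).strictMono_of_inj hinj).resolve_right
    fun hanti => by
      have := add_one_of_D1_eq hH hρ htwist hper huper hg 0
      rw [zero_add] at this
      linarith [hanti zero_lt_one]

lemma isMinOn_laxOleinikCost (hH : ContDiff ℝ 2 (uncurry H)) (hρ : 0 ≤ ρ)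
    (htwist : ∀ x x', D12 H x x' ≤ -ρ) (hu : Differentiable ℝ u)
    (hg : ∀ y, c + deriv u y = -D1 H y (g y)) (hmono : Monotone g) {x y₀ : ℝ}
    (hx : g y₀ = x) :
    IsMinOn (laxOleinikCost H c u x) univ y₀ := by
  have hderiv : ∀ t, HasDerivAt (laxOleinikCost H c u x) (D1 H t x - D1 H t (g t)) t := by
    intro t
    have hH1 : HasDerivAt (fun s => H s x) (D1 H t x) t :=
      ((hH.differentiable two_ne_zero).differentiable_left x t).hasDerivAt
    have := ((hu t).hasDerivAt.add hH1).sub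
      (((hasDerivAt_const t x).sub (hasDerivAt_id t)).const_mul c)
    exact this.congr_deriv (by linarith [hg t])
  have hdec := sub_le_of_deriv_right_le (differentiable_uncurry_D1 hH) htwist
  refine isMinOn_univ_of_deriv (hderiv y₀).continuousAt
    (fun t _ => (hderiv t).differentiableAt.differentiableWithinAt)
    (fun t _ => (hderiv t).differentiableAt.differentiableWithinAt)
    (fun t ht => ?_) fun t ht => ?_
  · have hgt : g t ≤ x := hx ▸ hmono (le_of_lt ht)
    rw [(hderiv t).deriv]
    nlinarith [hdec t hgt]
  · have hgt : x ≤ g t := hx ▸ hmono (le_of_lt ht)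
    rw [(hderiv t).deriv]
    nlinarith [hdec t hgt]

lemma abs_sub_le_of_D2_eq (hH : ContDiff ℝ 2 (uncurry H)) (hD21 : ∀ x x', |D21 H x x'| ≤ M)
    (hu : Differentiable ℝ u) {h : ℝ → ℝ} (hh : Monotone h)
    (hD2 : ∀ x, c + deriv u x = D2 H (h x) x) {a b y : ℝ} (hab : a ≤ b)
    (hy : y ∈ Icc (h a) (h b)) :
    |(H y b - c * b - u b) - (H y a - c * a - u a)| ≤ M * (h b - h a) * (b - a) := by
  have hderiv :
      ∀ s, HasDerivAt (fun s => H y s - c * s - u s) (D2 H y s - D2 H (h s) s) s := by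
    intro s
    have hH2 : HasDerivAt (fun s => H y s) (D2 H y s) s :=
      ((hH.differentiable two_ne_zero).differentiable_right y s).hasDerivAt
    exact ((hH2.sub ((hasDerivAt_id s).const_mul c)).sub (hu s).hasDerivAt).congr_deriv
      (by linarith [hD2 s])
  have hbound : ∀ s ∈ Icc a b, ‖D2 H y s - D2 H (h s) s‖ ≤ M * (h b - h a) := by
    intro s hs
    have hM : 0 ≤ M := (abs_nonneg _).trans (hD21 0 0)
    have hys : |y - h s| ≤ h b - h a := by
      rw [abs_sub_le_iff]
      constructor <;> linarith [hy.1, hy.2, hh hs.1, hh hs.2]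
    calc ‖D2 H y s - D2 H (h s) s‖ ≤ M * |y - h s| :=
          abs_sub_le_of_abs_deriv_left_le (differentiable_uncurry_D2 hH) hD21 s (h s) y
      _ ≤ M * (h b - h a) := by gcongr
  have := Convex.norm_image_sub_le_of_norm_hasDerivWithin_le
    (fun s _ => (hderiv s).hasDerivWithinAt) hbound (convex_Icc a b) (left_mem_Icc.2 hab)
    (right_mem_Icc.2 hab)
  rwa [Real.norm_eq_abs, Real.norm_eq_abs, abs_of_nonneg (sub_nonneg.2 hab)] at this

/-- Minimality at `h a` and at `h b` squeezes the increment of `T_c u - u` between the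
increments of `s ↦ H y s - c s - u s` for `y = h a` and `y = h b`. -/
lemma abs_laxOleinikCost_sub_le (hH : ContDiff ℝ 2 (uncurry H))
    (hD21 : ∀ x x', |D21 H x x'| ≤ M) (hu : Differentiable ℝ u) {h : ℝ → ℝ}
    (hh : Monotone h) (hD2 : ∀ x, c + deriv u x = D2 H (h x) x)
    (hmin : ∀ x, IsMinOn (laxOleinikCost H c u x) univ (h x)) (a b : ℝ) :
    |(laxOleinikCost H c u b (h b) - u b) - (laxOleinikCost H c u a (h a) - u a)| ≤
      M * |h b - h a| * |b - a| := by
  wlog hab : a ≤ b generalizing a b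
  · rw [abs_sub_comm, abs_sub_comm (h b), abs_sub_comm b]
    exact this b a (le_of_not_ge hab)
  rw [abs_of_nonneg (sub_nonneg.2 (hh hab)), abs_of_nonneg (sub_nonneg.2 hab)]
  have hlo := abs_sub_le_of_D2_eq hH hD21 hu hh hD2 hab ⟨le_rfl, hh hab⟩
  have hhi := abs_sub_le_of_D2_eq hH hD21 hu hh hD2 hab ⟨hh hab, le_rfl⟩
  have hmin_b : laxOleinikCost H c u b (h b) ≤ laxOleinikCost H c u b (h a) :=
    hmin b (mem_univ _)
  have hmin_a : laxOleinikCost H c u a (h a) ≤ laxOleinikCost H c u a (h b) :=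
    hmin a (mem_univ _)
  simp only [laxOleinikCost] at hmin_a hmin_b ⊢
  rw [abs_le] at hlo hhi ⊢
  constructor <;> linarith [hlo.1, hlo.2, hhi.1, hhi.2]

end TwistMap

theorem stmt13_general (H : ℝ → ℝ → ℝ) (ρ M : ℝ) (F : ℝ × ℝ → ℝ × ℝ)
    (hH : ContDiff ℝ 2 (Function.uncurry H))
    (hper : ∀ x x', H (x + 1) (x' + 1) = H x x')
    (hρ : 0 < ρ) (htwist : ∀ x x', D12 H x x' ≤ -ρ)
    (hbound : ∀ x x', |D11 H x x'| ≤ M ∧ |D12 H x x'| ≤ M ∧ |D21 H x x'| ≤ M ∧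
      |D22 H x x'| ≤ M)
    (hFdef : ∀ x r x' r', F (x, r) = (x', r') ↔ (r = -D1 H x x' ∧ r' = D2 H x x'))
    (u : ℝ → ℝ) (hu : ContDiff ℝ 1 u) (huper : ∀ x, u (x + 1) = u x) (c : ℝ)
    (hinv : Set.BijOn F {p : ℝ × ℝ | p.2 = c + deriv u p.1}
      {p : ℝ × ℝ | p.2 = c + deriv u p.1}) :
    ∃ α : ℝ, ∀ x : ℝ, (⨅ y : ℝ, (u y + H y x - c * (x - y))) = u x - α := by
  obtain ⟨g, ⟨hginj, hgsurj⟩, hg1, hg2⟩ := exists_bijective_of_bijOn_graph hFdef hinv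
  have hud : Differentiable ℝ u := hu.differentiable one_ne_zero
  have hmono : StrictMono g := strictMono_of_D1_eq hH hρ htwist (fun x x' => (hbound x x').1)
    (hu.continuous_deriv le_rfl) hper huper hg1 hginj
  set e := hmono.orderIsoOfSurjective g hgsurj
  have hge : ∀ x, g (e.symm x) = x := e.apply_symm_apply
  have hmin : ∀ x, IsMinOn (laxOleinikCost H c u x) univ (e.symm x) := fun x =>
    isMinOn_laxOleinikCost hH hρ.le htwist hud hg1 hmono.monotone (hge x)
  have hD2 : ∀ x, c + deriv u x = D2 H (e.symm x) x := fun x => by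
    simpa only [hge] using hg2 (e.symm x)
  have hconst := eq_of_abs_sub_le_mul_abs_sub e.symm.continuous
    (abs_laxOleinikCost_sub_le hH (fun x x' => (hbound x x').2.2.1) hud e.symm.monotone hD2
      hmin)
  refine ⟨u 0 - laxOleinikCost H c u 0 (e.symm 0), fun x => ?_⟩
  rw [show (⨅ y, (u y + H y x - c * (x - y))) = ⨅ y, laxOleinikCost H c u x y from rfl,
    (hmin x).ciInf_eq]
  linarith [hconst x 0]

/-- If the graph `{(x, c + u'(x))}` of a `C¹` periodic `u` is invariant under the twist
map `F`, then `u` is a weak KAM solution: there is `α ∈ ℝ` with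
`T_c u(x) := inf_y (u(y) + H(y, x) - c(x - y)) = u(x) - α` for all `x`. -/
theorem stmt13 (H : ℝ → ℝ → ℝ) (ρ M : ℝ) (F : ℝ × ℝ → ℝ × ℝ)
    (hH : ContDiff ℝ 2 (Function.uncurry H))
    (hper : ∀ x x', H (x + 1) (x' + 1) = H x x')
    (hρ : 0 < ρ) (htwist : ∀ x x', D12 H x x' ≤ -ρ)
    (hM : 0 < M)
    (hbound : ∀ x x', |D11 H x x'| ≤ M ∧ |D12 H x x'| ≤ M ∧ |D21 H x x'| ≤ M ∧
      |D22 H x x'| ≤ M)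
    (hFbij : Function.Bijective F)
    (hFdef : ∀ x r x' r', F (x, r) = (x', r') ↔ (r = -D1 H x x' ∧ r' = D2 H x x'))
    (u : ℝ → ℝ) (hu : ContDiff ℝ 1 u) (huper : ∀ x, u (x + 1) = u x) (c : ℝ)
    (hinv : Set.BijOn F {p : ℝ × ℝ | p.2 = c + deriv u p.1}
      {p : ℝ × ℝ | p.2 = c + deriv u p.1}) :
    ∃ α : ℝ, ∀ x : ℝ, (⨅ y : ℝ, (u y + H y x - c * (x - y))) = u x - α :=
  stmt13_general H ρ M F hH hper hρ htwist hbound hFdef u hu huper c hinv
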